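/- arXiv:0810.3090 — 4 statements merged into one kernel-verified Lean document; each statement's English description precedes it below -/
import Mathlib

section
/- Let X be a normed linear space modeled as above, with W a family of seminorms induced by bounded linear functionals. The quotient Fin(X)/𝔦, equipped with the norm ‖x + 𝔦‖ = sup_{p∈W} st(p(x)), is a well-defined normed space; moreover if the ultrafilter is countably incomplete (e.g. nonprincipal on ℕ) and W is countable, this quotient is a complete normed space (a Banach space). -/
/-!
The function `x ↦ sup_k st (*p_k x)` is a seminorm on the finite part whose kernel is exactly the
monad, so the quotient is the normed space attached to this seminorm and the quotient norm of
`x + 𝔦` is the seminorm of `x`. For completeness, take a sequence with `‖u n - u m‖ < 1/(m+1)`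
for `m ≤ n`. The bounds `*p_k (w - u n) ≤ 1/(n+1)` on a limit `w` are countably many internal
conditions, and every finite set of them is satisfied by some `u m`. Because the hyperfilter
refines the cofinite filter, a diagonal choice of representatives satisfies all of them at once
(countable saturation).
-/

open Filter ArchimedeanClass Hyperreal

theorem exists_forall_eventually_mem_of_le_atTop {α : Type*} [Nonempty α] {L : Filter ℕ}
    (hL : L ≤ atTop) (A : ℕ → ℕ → Set α) (hA : ∀ m, ∀ᶠ j in L, ∃ v, ∀ i ≤ m, v ∈ A i j) :
    ∃ w : ℕ → α, ∀ i, ∀ᶠ j in L, w j ∈ A i j := by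
  classical
  -- `M j` is the largest `m ≤ j` such that `A 0 j, …, A m j` have a common point.
  let M : ℕ → ℕ := fun j => Nat.findGreatest (fun m => ∃ v, ∀ i ≤ m, v ∈ A i j) j
  refine ⟨fun j => Classical.epsilon fun v => ∀ i ≤ M j, v ∈ A i j, fun i => ?_⟩
  filter_upwards [hA i, hL (eventually_ge_atTop i)] with j hj hij
  have hM : ∃ v, ∀ i ≤ M j, v ∈ A i j :=
    Nat.findGreatest_spec (P := fun m => ∃ v, ∀ i ≤ m, v ∈ A i j) hij hj
  exact Classical.epsilon_spec hM i (Nat.le_findGreatest hij hj)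

namespace AddGroupSeminorm

variable {V : Type*} [AddGroup V] (q : AddGroupSeminorm V)

/-- The nonstandard extension `*q` of `q` to the ultrapower of `V`. -/
noncomputable def hyper (x : Germ (hyperfilter ℕ : Filter ℕ) V) : ℝ* :=
  x.map q

theorem hyper_coe_le_iff (f : ℕ → V) (c : ℝ) :
    q.hyper ↑f ≤ (c : ℝ*) ↔ ∀ᶠ j in hyperfilter ℕ, q (f j) ≤ c :=
  Germ.coe_le

theorem hyper_nonneg (x : Germ (hyperfilter ℕ : Filter ℕ) V) : 0 ≤ q.hyper x :=
  x.inductionOn fun f => Germ.coe_le.2 <| .of_forall fun j => apply_nonneg q (f j)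

theorem hyper_add_le (x y : Germ (hyperfilter ℕ : Filter ℕ) V) :
    q.hyper (x + y) ≤ q.hyper x + q.hyper y :=
  x.inductionOn fun f => y.inductionOn fun g =>
    Germ.coe_le.2 <| .of_forall fun j => map_add_le_add q (f j) (g j)

@[simp]
theorem hyper_neg (x : Germ (hyperfilter ℕ : Filter ℕ) V) : q.hyper (-x) = q.hyper x :=
  x.inductionOn fun f => congrArg ofSeq <| funext fun j => map_neg_eq_map q (f j)

@[simp]
theorem hyper_zero : q.hyper 0 = 0 :=
  congrArg ofSeq <| funext fun _ => map_zero q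

end AddGroupSeminorm

section Hull

variable {V : Type*} [AddCommGroup V] {ι : Type*} (p : ι → AddGroupSeminorm V)

/-- Membership in the finite part `Fin(X)` with respect to the family `p`. -/
def IsFiniteFor (x : Germ (hyperfilter ℕ : Filter ℕ) V) : Prop :=
  ∃ n : ℕ, ∀ k, (p k).hyper x ≤ ((n : ℝ) : ℝ*)

noncomputable def hullNorm (x : Germ (hyperfilter ℕ : Filter ℕ) V) : ℝ :=
  ⨆ k, stdPart ((p k).hyper x)

variable {p} {x y : Germ (hyperfilter ℕ : Filter ℕ) V}

theorem mk_hyper_nonneg_of_le {k : ι} {c : ℝ} (h : (p k).hyper x ≤ c) :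
    0 ≤ ArchimedeanClass.mk ((p k).hyper x) :=
  mk_nonneg_of_le_of_le_of_archimedean coeRingHom (r := 0) ((p k).hyper_nonneg x) h

theorem IsFiniteFor.mk_nonneg (hx : IsFiniteFor p x) (k : ι) :
    0 ≤ ArchimedeanClass.mk ((p k).hyper x) :=
  mk_hyper_nonneg_of_le (hx.choose_spec k)

theorem isFiniteFor_of_le {c : ℝ} (h : ∀ k, (p k).hyper x ≤ c) : IsFiniteFor p x :=
  let ⟨n, hn⟩ := exists_nat_ge c
  ⟨n, fun k => (h k).trans (coe_le_coe.2 hn)⟩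

theorem IsFiniteFor.add (hx : IsFiniteFor p x) (hy : IsFiniteFor p y) : IsFiniteFor p (x + y) := by
  obtain ⟨m, hm⟩ := hx
  obtain ⟨n, hn⟩ := hy
  refine ⟨m + n, fun k => ((p k).hyper_add_le x y).trans ?_⟩
  push_cast
  exact add_le_add (hm k) (hn k)

theorem hullNorm_nonneg : 0 ≤ hullNorm p x :=
  Real.iSup_nonneg fun k => stdPart_nonneg ((p k).hyper_nonneg x)

theorem stdPart_le_hullNorm (hx : IsFiniteFor p x) (k : ι) :
    stdPart ((p k).hyper x) ≤ hullNorm p x := by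
  obtain ⟨n, hn⟩ := hx
  refine le_ciSup (f := fun k => stdPart ((p k).hyper x)) ⟨n, Set.forall_mem_range.2 fun k => ?_⟩ k
  exact stdPart_le_of_le coeRingHom (mk_hyper_nonneg_of_le (hn k)) (hn k)

theorem hullNorm_le {c : ℝ} (hc : 0 ≤ c) (h : ∀ k, (p k).hyper x ≤ c) : hullNorm p x ≤ c :=
  Real.iSup_le (fun k => stdPart_le_of_le coeRingHom (mk_hyper_nonneg_of_le (h k)) (h k)) hc

theorem hyper_le_of_hullNorm_lt (hx : IsFiniteFor p x) {c : ℝ} (h : hullNorm p x < c) (k : ι) :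
    (p k).hyper x ≤ c :=
  (lt_of_stdPart_lt coeRingHom (hx.mk_nonneg k) ((stdPart_le_hullNorm hx k).trans_lt h)).le

theorem hullNorm_add_le (hx : IsFiniteFor p x) (hy : IsFiniteFor p y) :
    hullNorm p (x + y) ≤ hullNorm p x + hullNorm p y := by
  refine Real.iSup_le (fun k => ?_) (add_nonneg hullNorm_nonneg hullNorm_nonneg)
  calc stdPart ((p k).hyper (x + y))
      ≤ stdPart ((p k).hyper x + (p k).hyper y) :=
        stdPart_monotoneOn ((hx.add hy).mk_nonneg k)
          ((le_min (hx.mk_nonneg k) (hy.mk_nonneg k)).trans (min_le_mk_add _ _))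
          ((p k).hyper_add_le x y)
    _ = stdPart ((p k).hyper x) + stdPart ((p k).hyper y) :=
        stdPart_add (hx.mk_nonneg k) (hy.mk_nonneg k)
    _ ≤ hullNorm p x + hullNorm p y :=
        add_le_add (stdPart_le_hullNorm hx k) (stdPart_le_hullNorm hy k)

@[simp]
theorem hullNorm_neg : hullNorm p (-x) = hullNorm p x := by
  simp [hullNorm]

@[simp]
theorem hullNorm_zero : hullNorm p (0 : Germ (hyperfilter ℕ : Filter ℕ) V) = 0 := by
  simp [hullNorm]

theorem hullNorm_eq_zero_iff (hx : IsFiniteFor p x) :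
    hullNorm p x = 0 ↔ ∀ k, ∀ m : ℕ, 0 < m → (p k).hyper x ≤ ((1 / m : ℝ) : ℝ*) := by
  refine ⟨fun h k m hm => hyper_le_of_hullNorm_lt hx (by rw [h]; positivity) k, fun h => ?_⟩
  refine le_antisymm (le_of_forall_pos_lt_add fun δ hδ => ?_) hullNorm_nonneg
  obtain ⟨m, hm⟩ := exists_nat_one_div_lt hδ
  calc hullNorm p x ≤ 1 / ((m + 1 : ℕ) : ℝ) := hullNorm_le (by positivity) fun k => h k _ m.succ_pos
    _ < 0 + δ := by push_cast; linarith

variable {𝕜 : Type*} [Ring 𝕜] [Module 𝕜 V] (F : Submodule 𝕜 (Germ (hyperfilter ℕ : Filter ℕ) V))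
  (hF : ∀ x ∈ F, IsFiniteFor p x)

noncomputable def hullSeminorm : AddGroupSeminorm F where
  toFun x := hullNorm p x
  map_zero' := hullNorm_zero
  add_le' x y := hullNorm_add_le (hF x x.2) (hF y y.2)
  neg' _ := hullNorm_neg

end Hull

section Completeness

variable {V : Type*} [AddCommGroup V] (p : ℕ → AddGroupSeminorm V)

theorem exists_hyper_sub_le_of_cauchy (u : ℕ → Germ (hyperfilter ℕ : Filter ℕ) V) (r : ℕ → ℝ)
    (hu : ∀ m n, m ≤ n → ∀ k, (p k).hyper (u n - u m) ≤ r m) :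
    ∃ w, ∀ n k, (p k).hyper (w - u n) ≤ r n := by
  choose f hf using fun n =>
    (u n).inductionOn (p := fun x => ∃ f : ℕ → V, ↑f = x) fun f => ⟨f, rfl⟩
  let A : ℕ → ℕ → Set V := fun n j => {v | ∀ i ≤ n, ∀ k ≤ n, p k (v - f i j) ≤ r i}
  have hA : ∀ m, ∀ᶠ j in hyperfilter ℕ, ∃ v, ∀ n ≤ m, v ∈ A n j := by
    intro m
    have hfm : ∀ᶠ j in hyperfilter ℕ, ∀ i ∈ Set.Iic m, ∀ k ∈ Set.Iic m,
        p k (f m j - f i j) ≤ r i := by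
      refine (eventually_all_finite (Set.finite_Iic m)).2 fun i hi => ?_
      refine (eventually_all_finite (Set.finite_Iic m)).2 fun k _ => ?_
      have h := hu i m hi k
      rwa [← hf m, ← hf i, ← Germ.coe_sub, AddGroupSeminorm.hyper_coe_le_iff] at h
    filter_upwards [hfm] with j hj
    exact ⟨f m j, fun n hn i hi k hk => hj i (hi.trans hn) k (hk.trans hn)⟩
  obtain ⟨w, hw⟩ := exists_forall_eventually_mem_of_le_atTop Nat.hyperfilter_le_atTop A hA
  refine ⟨↑w, fun n k => ?_⟩
  rw [← hf n, ← Germ.coe_sub, AddGroupSeminorm.hyper_coe_le_iff]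
  filter_upwards [hw (max n k)] with j hj
  exact hj n (le_max_left n k) k (le_max_right n k)

variable {𝕜 : Type*} [Ring 𝕜] [Module 𝕜 V] {F : Submodule 𝕜 (Germ (hyperfilter ℕ : Filter ℕ) V)}

theorem completeSpace_hullSeminorm (hF : ∀ x, x ∈ F ↔ IsFiniteFor p x) :
    letI := (hullSeminorm F fun x => (hF x).1).toSeminormedAddCommGroup
    CompleteSpace F := by
  let _ := (hullSeminorm F fun x => (hF x).1).toSeminormedAddCommGroup
  have hfin : ∀ x : F, IsFiniteFor p x := fun x => (hF x).1 x.2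
  refine Metric.complete_of_convergent_controlled_sequences (fun N => 1 / (N + 1))
    (fun N => by positivity) fun u hu => ?_
  obtain ⟨w, hw⟩ := exists_hyper_sub_le_of_cauchy p (fun n => u n) (fun N => 1 / (N + 1))
    fun m n hmn => hyper_le_of_hullNorm_lt (hfin (u n - u m)) <| by
      have h := hu m n m hmn le_rfl
      rwa [dist_eq_norm] at h
  have hwF : w ∈ F := by
    have h := (isFiniteFor_of_le (hw 0)).add (hfin (u 0))
    rwa [sub_add_cancel, ← hF] at h
  refine ⟨⟨w, hwF⟩, tendsto_iff_dist_tendsto_zero.2 <| squeeze_zero (fun _ => dist_nonneg)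
    (fun n => ?_) tendsto_one_div_add_atTop_nhds_zero_nat⟩
  rw [dist_eq_norm']
  exact hullNorm_le (by positivity) (hw n)

end Completeness

theorem Submodule.Quotient.norm_mk_of_forall_norm_eq_zero {R M : Type*} [Ring R]
    [SeminormedAddCommGroup M] [Module R M] {S : Submodule R M} (hS : ∀ s ∈ S, ‖s‖ = 0)
    (x : M) : ‖(Submodule.Quotient.mk x : M ⧸ S)‖ = ‖x‖ := by
  refine le_antisymm (Submodule.Quotient.norm_mk_le S x) (le_of_forall_pos_lt_add fun δ hδ => ?_)
  obtain ⟨m, hm, hlt⟩ := Submodule.Quotient.norm_mk_lt (Submodule.Quotient.mk x : M ⧸ S) hδ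
  have hxm : ‖x - m‖ = 0 := hS _ ((Submodule.Quotient.eq S).1 hm.symm)
  calc ‖x‖ ≤ ‖m‖ + ‖x - m‖ := norm_le_insert' ..
    _ < _ := by rw [hxm, add_zero]; exact hlt

theorem weak_hull_quotient_is_banach_general
    (V : Type*) [NormedAddCommGroup V] [NormedSpace ℂ V]
    (φ : ℕ → (V →L[ℂ] ℂ))
    (FinS IS : Submodule ℂ (Filter.Germ (Filter.hyperfilter ℕ : Filter ℕ) V))
    (hFin : (FinS : Set (Filter.Germ (Filter.hyperfilter ℕ : Filter ℕ) V)) =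
      {x | ∃ n : ℕ, ∀ k : ℕ,
        Filter.Germ.map (fun v => ‖φ k v‖) x ≤ ((n : ℝ) : Hyperreal)})
    (hI : (IS : Set (Filter.Germ (Filter.hyperfilter ℕ : Filter ℕ) V)) =
      {x | (∃ n : ℕ, ∀ k : ℕ,
          Filter.Germ.map (fun v => ‖φ k v‖) x ≤ ((n : ℝ) : Hyperreal)) ∧
        ∀ k : ℕ, ∀ m : ℕ, 0 < m →
          Filter.Germ.map (fun v => ‖φ k v‖) x ≤ ((1 / m : ℝ) : Hyperreal)}) :
    ∃ inst : NormedAddCommGroup (FinS ⧸ (IS.comap FinS.subtype)),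
      (∀ x : FinS, @norm _ inst.toNorm (Submodule.Quotient.mk x) =
        ⨆ k : ℕ, Hyperreal.st (Filter.Germ.map (fun v => ‖φ k v‖) (x : _))) ∧
      @CompleteSpace (FinS ⧸ (IS.comap FinS.subtype)) inst.toMetricSpace.toUniformSpace := by
  let p : ℕ → AddGroupSeminorm V := fun k => (normAddGroupSeminorm ℂ).comp (φ k).toAddMonoidHom
  have hF : ∀ x, x ∈ FinS ↔ IsFiniteFor p x := fun x => Set.ext_iff.1 hFin x
  let _ := (hullSeminorm FinS fun x => (hF x).1).toSeminormedAddCommGroup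
  have hker : ∀ x : FinS, x ∈ IS.comap FinS.subtype ↔ ‖x‖ = 0 := fun x =>
    (Set.ext_iff.1 hI x).trans <| (and_iff_right ((hF x).1 x.2)).trans
      (hullNorm_eq_zero_iff ((hF x).1 x.2)).symm
  have : IsClosed (IS.comap FinS.subtype : Set FinS) := by
    rw [show (IS.comap FinS.subtype : Set FinS) = {x | ‖x‖ = 0} from Set.ext hker]
    exact isClosed_eq continuous_norm continuous_const
  have := completeSpace_hullSeminorm p hF
  refine ⟨inferInstance, fun x => ?_, inferInstance⟩
  rw [Submodule.Quotient.norm_mk_of_forall_norm_eq_zero fun s hs => (hker s).1 hs]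
  exact iSup_congr fun k => (Hyperreal.st_eq _).symm

/-- Let `V` be a complex normed space, `X = Germ (hyperfilter ℕ) V` its ultrapower
along the (nonprincipal, hence countably incomplete) hyperfilter, and let `W` be a countable
family of seminorms `p_φₖ(x) = |*φₖ(x)|` induced by bounded linear functionals `φₖ` of norm `≤ 1`.
Let `FinS` be the finite part and `IS` the monad of `0` with respect to `W`.  Then the quotient
`FinS ⧸ IS`, with norm `‖x + IS‖ = sup_k st(p_φₖ(x))`, is a well-defined normed space, and it is
complete, i.e. a Banach space. -/
theorem weak_hull_quotient_is_banach
    (V : Type*) [NormedAddCommGroup V] [NormedSpace ℂ V]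
    (φ : ℕ → (V →L[ℂ] ℂ)) (hφ : ∀ k, ‖φ k‖ ≤ 1)
    (FinS IS : Submodule ℂ (Filter.Germ (Filter.hyperfilter ℕ : Filter ℕ) V))
    (hFin : (FinS : Set (Filter.Germ (Filter.hyperfilter ℕ : Filter ℕ) V)) =
      {x | ∃ n : ℕ, ∀ k : ℕ,
        Filter.Germ.map (fun v => ‖φ k v‖) x ≤ ((n : ℝ) : Hyperreal)})
    (hI : (IS : Set (Filter.Germ (Filter.hyperfilter ℕ : Filter ℕ) V)) =
      {x | (∃ n : ℕ, ∀ k : ℕ,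
          Filter.Germ.map (fun v => ‖φ k v‖) x ≤ ((n : ℝ) : Hyperreal)) ∧
        ∀ k : ℕ, ∀ m : ℕ, 0 < m →
          Filter.Germ.map (fun v => ‖φ k v‖) x ≤ ((1 / m : ℝ) : Hyperreal)}) :
    ∃ inst : NormedAddCommGroup (FinS ⧸ (IS.comap FinS.subtype)),
      (∀ x : FinS, @norm _ inst.toNorm (Submodule.Quotient.mk x) =
        ⨆ k : ℕ, Hyperreal.st (Filter.Germ.map (fun v => ‖φ k v‖) (x : _))) ∧
      @CompleteSpace (FinS ⧸ (IS.comap FinS.subtype)) inst.toMetricSpace.toUniformSpace :=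
  weak_hull_quotient_is_banach_general V φ FinS IS hFin hI
end

section
/- (Goldstine's Theorem) For any normed space X, the image of the closed unit ball of X under the canonical embedding into the bidual X'' is dense in the closed unit ball of X'' with respect to the weak-* topology σ(X'', X'). -/
/-!
Suppose `z ∈ X''` with `‖z‖ ≤ 1` lies outside the weak-* closure of `J(B_X)`. That closure is
convex, and the weak-* topology is locally convex, so Hahn–Banach separates `z` from it by a
weak-* continuous functional; such a functional is evaluation at some `φ ∈ X'`. Thus
`re φ(x) < u < re z(φ)` for all `x ∈ B_X`; rotating `x` by a unimodular scalar shows `‖φ‖ ≤ u`,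
whereas `re z(φ) ≤ ‖z‖ ‖φ‖ ≤ u`.
-/

open NormedSpace Metric Set RCLike
open scoped ComplexConjugate

namespace WeakDual

variable {𝕜 E : Type*} [RCLike 𝕜] [AddCommGroup E] [TopologicalSpace E] [Module 𝕜 E]

instance instIsScalarTowerReal : IsScalarTower ℝ 𝕜 (WeakDual 𝕜 E) :=
  inferInstanceAs (IsScalarTower ℝ 𝕜 (E →L[𝕜] 𝕜))

instance instLocallyConvexSpaceReal : LocallyConvexSpace ℝ (WeakDual 𝕜 E) :=
  WeakBilin.locallyConvexSpace (B := topDualPairing 𝕜 E)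

theorem exists_forall_apply_eq_eval (f : StrongDual 𝕜 (WeakDual 𝕜 E)) :
    ∃ x : E, ∀ φ : WeakDual 𝕜 E, f φ = φ x := by
  obtain ⟨x, rfl⟩ := LinearMap.dualEmbedding_surjective (topDualPairing 𝕜 E) f
  exact ⟨x, fun _ => rfl⟩

end WeakDual

section

variable {𝕜 E : Type*} [RCLike 𝕜] [NormedAddCommGroup E] [NormedSpace 𝕜 E]

theorem ContinuousLinearMap.norm_le_of_forall_re_le {φ : StrongDual 𝕜 E} {u : ℝ}
    (h : ∀ x, ‖x‖ ≤ 1 → re (φ x) ≤ u) : ‖φ‖ ≤ u := by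
  have hu : 0 ≤ u := by simpa using h 0 (by simp)
  refine φ.opNorm_le_of_unit_norm hu fun x hx => ?_
  set c : 𝕜 := conj (φ x) / ‖φ x‖
  have hc : ‖c‖ ≤ 1 := by simpa [c, norm_div] using div_self_le_one ‖φ x‖
  have hφc : φ (c • x) = ‖φ x‖ := by
    rw [map_smul, smul_eq_mul, div_mul_eq_mul_div, RCLike.conj_mul]
    rcases eq_or_ne ‖φ x‖ 0 with h0 | h0
    · simp [h0]
    · field_simp
  calc ‖φ x‖ = re (φ (c • x)) := by simp [hφc]
    _ ≤ u := h _ (by simpa [norm_smul, hx] using hc)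

theorem LinearMap.convex_image_closedBall {F : Type*} [AddCommMonoid F] [Module 𝕜 F] [Module ℝ F]
    [IsScalarTower ℝ 𝕜 F] (f : E →ₗ[𝕜] F) (r : ℝ) : Convex ℝ (f '' closedBall 0 r) := by
  rintro _ ⟨x, hx, rfl⟩ _ ⟨y, hy, rfl⟩ a b ha hb hab
  refine ⟨(a : 𝕜) • x + (b : 𝕜) • y, ?_, by simp⟩
  rw [mem_closedBall_zero_iff] at hx hy ⊢
  calc ‖(a : 𝕜) • x + (b : 𝕜) • y‖ ≤ a * ‖x‖ + b * ‖y‖ := by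
        refine (norm_add_le _ _).trans ?_
        simp [norm_smul, abs_of_nonneg ha, abs_of_nonneg hb]
    _ ≤ a * r + b * r := by gcongr
    _ = r := by rw [← add_mul, hab, one_mul]

theorem WeakDual.image_closedBall_subset_closure_image_inclusionInDoubleDual :
    StrongDual.toWeakDual '' closedBall (0 : StrongDual 𝕜 (StrongDual 𝕜 E)) 1 ⊆
      closure ((fun x : E => StrongDual.toWeakDual (inclusionInDoubleDual 𝕜 E x)) ''
        closedBall 0 1) := by
  rintro _ ⟨z, hz, rfl⟩
  by_contra hz_notMem
  -- Elaborating `Convex.closure` without explicit arguments times out unifying the additive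
  -- structure that `WeakDual` derives with the one coming from its `AddCommGroup` instance.
  have hconvex := @Convex.closure ℝ (WeakDual 𝕜 (StrongDual 𝕜 E)) _ _ _ _ _ _ _ _
    (LinearMap.convex_image_closedBall
      (StrongDual.toWeakDual.toLinearMap ∘ₗ (inclusionInDoubleDual 𝕜 E).toLinearMap) 1)
  obtain ⟨f, u, hf_lt, hu_lt⟩ :=
    RCLike.geometric_hahn_banach_closed_point (𝕜 := 𝕜) hconvex isClosed_closure hz_notMem
  obtain ⟨φ, hf⟩ := WeakDual.exists_forall_apply_eq_eval f
  have hφ : ‖φ‖ ≤ u := ContinuousLinearMap.norm_le_of_forall_re_le fun x hx => by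
    simpa [hf] using (hf_lt _ (subset_closure ⟨x, mem_closedBall_zero_iff.2 hx, rfl⟩)).le
  have hzφ : re (z φ) ≤ u := calc
    re (z φ) ≤ ‖z φ‖ := re_le_norm _
    _ ≤ ‖z‖ * ‖φ‖ := z.le_opNorm φ
    _ ≤ 1 * u := mul_le_mul ((dist_zero_right z).symm.trans_le hz) hφ (norm_nonneg φ) zero_le_one
    _ = u := one_mul u
  rw [hf] at hu_lt
  exact hzφ.not_gt hu_lt

end

/-- Goldstine's theorem: for a normed space `X`, the image of the closed unit ball
of `X` under the canonical embedding `J : X → X''` is dense in the closed unit ball of `X''`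
for the weak-* topology `σ(X'', X')`. -/
theorem goldstine
    (X : Type*) [NormedAddCommGroup X] [NormedSpace ℂ X] :
    (StrongDual.toWeakDual '' Metric.closedBall (0 : StrongDual ℂ (StrongDual ℂ X)) 1) ⊆
      closure ((fun x : X =>
        StrongDual.toWeakDual (NormedSpace.inclusionInDoubleDual ℂ X x)) ''
          Metric.closedBall (0 : X) 1) :=
  WeakDual.image_closedBall_subset_closure_image_inclusionInDoubleDual
end

section
/- (Helly's Theorem) Let X be a normed space, x'' ∈ X'' an element of the bidual, A ⊆ X' a finite set of bounded functionals, and ε > 0. Then there exists a ∈ X with ‖a‖ ≤ ‖x''‖ + ε and φ(a) = x''(φ) for every φ ∈ A. -/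
/-!
First solve the finite system `φ a₀ = x'' φ` (`φ ∈ A`) with no norm control: it is consistent
because every linear relation among the `φ` is respected by the linear functional `x''`.
Then let `Y` be the common kernel of the `φ ∈ A`, so that `a₀ + Y` is the full solution set.
A functional vanishing on `Y` is a linear combination of the `φ ∈ A`, so `x''` agrees with
evaluation at `a₀` on it; by Hahn–Banach the norm of `a₀` in `X ⧸ Y` is therefore at most
`‖x''‖`, and a representative of that class of norm below `‖x''‖ + ε` does the job.
-/

open NormedSpace Submodule

theorem exists_forall_apply_eq_of_forall_sum_smul_eq_zero {K V ι : Type*} [Field K]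
    [AddCommGroup V] [Module K V] [Fintype ι] (L : ι → Module.Dual K V) (c : ι → K)
    (h : ∀ μ : ι → K, ∑ i, μ i • L i = 0 → ∑ i, μ i * c i = 0) :
    ∃ v, ∀ i, L i v = c i := by
  classical
  suffices c ∈ LinearMap.range (LinearMap.pi L) from
    this.imp fun v hv i => congrFun hv i
  rw [← Subspace.forall_mem_dualAnnihilator_apply_eq_zero_iff]
  intro f hf
  set μ : ι → K := fun i => f fun j => if i = j then 1 else 0
  have hf' : ∑ i, μ i • L i = 0 := by
    ext v
    have := (mem_dualAnnihilator _).1 hf _ (LinearMap.mem_range_self _ v)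
    rw [LinearMap.pi_apply_eq_sum_univ f] at this
    simpa [mul_comm] using this
  rw [LinearMap.pi_apply_eq_sum_univ f]
  simpa [mul_comm] using h μ hf'

namespace ContinuousLinearMap

variable {𝕜 X ι : Type*} [Field 𝕜] [TopologicalSpace 𝕜] [IsTopologicalRing 𝕜] [AddCommGroup X]
  [Module 𝕜 X] [TopologicalSpace X] [Fintype ι]

theorem exists_forall_apply_eq
    (Φ : (X →L[𝕜] 𝕜) →ₗ[𝕜] 𝕜) (φ : ι → X →L[𝕜] 𝕜) : ∃ x, ∀ i, φ i x = Φ (φ i) := by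
  refine exists_forall_apply_eq_of_forall_sum_smul_eq_zero (fun i => (φ i : X →ₗ[𝕜] 𝕜)) _
    fun μ hμ => ?_
  have hsum : ∑ i, μ i • φ i = 0 := by
    ext x
    simpa using LinearMap.congr_fun hμ x
  simpa [map_sum, smul_eq_mul] using congrArg Φ hsum

theorem mem_span_of_iInf_ker_le_ker {φ : ι → X →L[𝕜] 𝕜} {ψ : X →L[𝕜] 𝕜}
    (h : ⨅ i, LinearMap.ker (φ i : X →ₗ[𝕜] 𝕜) ≤ LinearMap.ker (ψ : X →ₗ[𝕜] 𝕜)) :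
    ψ ∈ span 𝕜 (Set.range φ) := by
  obtain ⟨c, hc⟩ := (mem_span_range_iff_exists_fun 𝕜).1 (_root_.mem_span_of_iInf_ker_le_ker h)
  refine (mem_span_range_iff_exists_fun 𝕜).2 ⟨c, ?_⟩
  ext x
  simpa using LinearMap.congr_fun hc x

end ContinuousLinearMap

theorem norm_mk_iInf_ker_le_of_forall_apply_eq {𝕜 X ι : Type*} [RCLike 𝕜] [SeminormedAddCommGroup X]
    [NormedSpace 𝕜 X] [Fintype ι] (x'' : StrongDual 𝕜 (StrongDual 𝕜 X))
    (φ : ι → StrongDual 𝕜 X) {a : X} (ha : ∀ i, φ i a = x'' (φ i)) :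
    ‖(Submodule.Quotient.mk a : X ⧸ ⨅ i, LinearMap.ker (φ i : X →ₗ[𝕜] 𝕜))‖ ≤ ‖x''‖ := by
  set Y := ⨅ i, LinearMap.ker (φ i : X →ₗ[𝕜] 𝕜)
  refine norm_le_dual_bound 𝕜 _ (norm_nonneg x'') fun g => ?_
  set ψ : StrongDual 𝕜 X := g ∘L Y.mkQL
  have hψ : ‖ψ‖ ≤ ‖g‖ := ContinuousLinearMap.opNorm_le_bound _ (norm_nonneg g) fun x =>
    (g.le_opNorm _).trans (by gcongr; exact Submodule.Quotient.norm_mk_le _ _)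
  have hψY : Y ≤ LinearMap.ker (ψ : X →ₗ[𝕜] 𝕜) := fun x hx => by
    simp [ψ, (Submodule.Quotient.mk_eq_zero Y).2 hx]
  have hψa : ψ a = x'' ψ :=
    LinearMap.eqOn_span (f := (inclusionInDoubleDual 𝕜 X a : StrongDual 𝕜 X →ₗ[𝕜] 𝕜))
      (g := x'') (Set.forall_mem_range.2 ha)
      (ContinuousLinearMap.mem_span_of_iInf_ker_le_ker hψY)
  calc ‖g (Submodule.Quotient.mk a)‖ = ‖x'' ψ‖ := by rw [← hψa]; rfl
    _ ≤ ‖x''‖ * ‖ψ‖ := x''.le_opNorm ψ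
    _ ≤ ‖x''‖ * ‖g‖ := by gcongr

/-- Helly's theorem: given `x''` in the bidual of a normed space `X`, a finite set
`A` of bounded functionals on `X` and `ε > 0`, there is `a ∈ X` with `‖a‖ ≤ ‖x''‖ + ε` and
`φ a = x'' φ` for every `φ ∈ A`. -/
theorem helly
    (X : Type*) [NormedAddCommGroup X] [NormedSpace ℂ X]
    (x'' : StrongDual ℂ (StrongDual ℂ X)) (A : Finset (StrongDual ℂ X)) (ε : ℝ) (hε : 0 < ε) :
    ∃ a : X, ‖a‖ ≤ ‖x''‖ + ε ∧ ∀ φ ∈ A, φ a = x'' φ := by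
  obtain ⟨a₀, ha₀⟩ := ContinuousLinearMap.exists_forall_apply_eq x''.toLinearMap
    (Subtype.val : A → StrongDual ℂ X)
  obtain ⟨a, hmk, ha_lt⟩ := Submodule.Quotient.norm_mk_lt
    (Submodule.Quotient.mk a₀ : X ⧸ ⨅ φ : A, LinearMap.ker (φ.1 : X →ₗ[ℂ] ℂ)) hε
  refine ⟨a, by linarith [norm_mk_iInf_ker_le_of_forall_apply_eq x'' Subtype.val ha₀],
    fun φ hφ => ?_⟩
  have hφa := (mem_iInf _).1 ((Submodule.Quotient.eq _).1 hmk) ⟨φ, hφ⟩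
  rw [LinearMap.mem_ker, map_sub, sub_eq_zero] at hφa
  exact hφa.trans (ha₀ ⟨φ, hφ⟩)
end

section
/- With π : A'' → B(H) as above, the image π(A'') is closed under operator composition: for F, G ∈ A'' there exists C ∈ A'' with π(C) = π(F) ∘ π(G); C is determined by C(ω_{ξ,ρ}|_A) = ⟨π(F)(π(G)ρ), ξ⟩ for all ξ, ρ ∈ H. -/
/-!
The composite is the first Arens product `F □ G = F ∘ (G · -)`, where `A''` acts on `A'` by
`(G · φ)(x) = G(y ↦ φ(x y))`. On a vector functional, `y ↦ ω_{ξ,η}(x y)` is `ω_{ρ(x)^* ξ, η}`,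
so `G · ω_{ξ,η} = ω_{ξ, π(G) η}` and hence `(F □ G)(ω_{ξ,η}) = ⟪ξ, π(F) (π(G) η)⟫`.
-/

open scoped InnerProductSpace

open ContinuousLinearMap

section Arens

variable {𝕜 A : Type*} [NontriviallyNormedField 𝕜] [NonUnitalNormedRing A] [NormedSpace 𝕜 A]
  [IsScalarTower 𝕜 A A] [SMulCommClass 𝕜 A A]

noncomputable def dualMulLeft : StrongDual 𝕜 A →L[𝕜] A →L[𝕜] StrongDual 𝕜 A :=
  (precompR A (compL 𝕜 A A 𝕜)).flip (mul 𝕜 A)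

@[simp]
theorem dualMulLeft_apply_apply (φ : StrongDual 𝕜 A) (x y : A) :
    dualMulLeft φ x y = φ (x * y) :=
  rfl

noncomputable def arensAction (G : StrongDual 𝕜 (StrongDual 𝕜 A)) :
    StrongDual 𝕜 A →L[𝕜] StrongDual 𝕜 A :=
  compL 𝕜 A (StrongDual 𝕜 A) 𝕜 G ∘L dualMulLeft

@[simp]
theorem arensAction_apply_apply (G : StrongDual 𝕜 (StrongDual 𝕜 A)) (φ : StrongDual 𝕜 A)
    (x : A) : arensAction G φ x = G (dualMulLeft φ x) :=
  rfl

noncomputable def arensProduct (F G : StrongDual 𝕜 (StrongDual 𝕜 A)) :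
    StrongDual 𝕜 (StrongDual 𝕜 A) :=
  F ∘L arensAction G

@[simp]
theorem arensProduct_apply (F G : StrongDual 𝕜 (StrongDual 𝕜 A)) (φ : StrongDual 𝕜 A) :
    arensProduct F G φ = F (arensAction G φ) :=
  rfl

end Arens

section VectorFunctionals

variable {𝕜 A H : Type*} [RCLike 𝕜] [NonUnitalNormedRing A] [NormedSpace 𝕜 A]
  [IsScalarTower 𝕜 A A] [SMulCommClass 𝕜 A A]
  [NormedAddCommGroup H] [InnerProductSpace 𝕜 H] [CompleteSpace H]
  {ρ : A →ₙ* (H →L[𝕜] H)} {ω : H → H → StrongDual 𝕜 A}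

theorem dualMulLeft_vectorFunctional (hω : ∀ ξ η x, ω ξ η x = ⟪ξ, ρ x η⟫_𝕜) (ξ η : H) (x : A) :
    dualMulLeft (ω ξ η) x = ω (adjoint (ρ x) ξ) η := by
  ext y
  rw [dualMulLeft_apply_apply, hω, hω, map_mul, mul_apply_eq_comp, adjoint_inner_left]

variable {π : StrongDual 𝕜 (StrongDual 𝕜 A) → (H →L[𝕜] H)}

theorem arensAction_vectorFunctional (hω : ∀ ξ η x, ω ξ η x = ⟪ξ, ρ x η⟫_𝕜)
    (hπ : ∀ F ξ η, ⟪ξ, π F η⟫_𝕜 = F (ω ξ η)) (G : StrongDual 𝕜 (StrongDual 𝕜 A)) (ξ η : H) :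
    arensAction G (ω ξ η) = ω ξ (π G η) := by
  ext x
  rw [arensAction_apply_apply, dualMulLeft_vectorFunctional hω, ← hπ, adjoint_inner_left, hω]

theorem arensProduct_vectorFunctional (hω : ∀ ξ η x, ω ξ η x = ⟪ξ, ρ x η⟫_𝕜)
    (hπ : ∀ F ξ η, ⟪ξ, π F η⟫_𝕜 = F (ω ξ η)) (F G : StrongDual 𝕜 (StrongDual 𝕜 A)) (ξ η : H) :
    arensProduct F G (ω ξ η) = ⟪ξ, π F (π G η)⟫_𝕜 := by
  rw [arensProduct_apply, arensAction_vectorFunctional hω hπ, hπ]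

theorem map_arensProduct (hω : ∀ ξ η x, ω ξ η x = ⟪ξ, ρ x η⟫_𝕜)
    (hπ : ∀ F ξ η, ⟪ξ, π F η⟫_𝕜 = F (ω ξ η)) (F G : StrongDual 𝕜 (StrongDual 𝕜 A)) :
    π (arensProduct F G) = π F ∘L π G := by
  ext η
  refine ext_inner_left 𝕜 fun ξ => ?_
  rw [hπ, arensProduct_vectorFunctional hω hπ, comp_apply]

end VectorFunctionals

theorem pi_image_closed_under_composition_general
    (A : Type*) [CStarAlgebra A]
    (H : Type*) [NormedAddCommGroup H] [InnerProductSpace ℂ H] [CompleteSpace H]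
    (ρu : A →⋆ₐ[ℂ] (H →L[ℂ] H))
    (omegaA : H → H → StrongDual ℂ A)
    (homega : ∀ ξ η : H, ∀ x : A, omegaA ξ η x = ⟪ξ, ρu x η⟫_ℂ)
    (π : StrongDual ℂ (StrongDual ℂ A) → (H →L[ℂ] H))
    (hπ : ∀ F, ∀ ξ η : H, ⟪ξ, π F η⟫_ℂ = F (omegaA ξ η)) :
    ∀ F G : StrongDual ℂ (StrongDual ℂ A),
      ∃ C : StrongDual ℂ (StrongDual ℂ A),
        π C = (π F).comp (π G) ∧
        ∀ ξ η : H, C (omegaA ξ η) = ⟪ξ, π F (π G η)⟫_ℂ := by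
  exact fun F G => ⟨arensProduct F G, map_arensProduct (ρ := ρu) homega hπ F G,
    arensProduct_vectorFunctional (ρ := ρu) homega hπ F G⟩

/-- with `π : A'' → B(H)` determined by `⟨ξ, π(F) η⟩ = F(ω_{ξ,η}|_A)`, the image
of `π` is closed under operator composition: for `F, G ∈ A''` there is `C ∈ A''` with
`π(C) = π(F) ∘ π(G)`; `C` is determined on the vector functionals by
`C(ω_{ξ,η}|_A) = ⟨ξ, π(F)(π(G) η)⟩` for all `ξ, η ∈ H`. -/
theorem pi_image_closed_under_composition
    (A : Type*) [CStarAlgebra A]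
    (H : Type*) [NormedAddCommGroup H] [InnerProductSpace ℂ H] [CompleteSpace H]
    (ρu : A →⋆ₐ[ℂ] (H →L[ℂ] H)) (hρu : Isometry ρu)
    (omegaA : H → H → StrongDual ℂ A)
    (homega : ∀ ξ η : H, ∀ x : A, omegaA ξ η x = ⟪ξ, ρu x η⟫_ℂ)
    (hcomb : ∀ φ : StrongDual ℂ A, ∃ (m : ℕ) (ξ η : Fin m → H) (c : Fin m → ℂ),
      φ = ∑ k : Fin m, c k • omegaA (ξ k) (η k))
    (π : StrongDual ℂ (StrongDual ℂ A) → (H →L[ℂ] H))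
    (hπ : ∀ F, ∀ ξ η : H, ⟪ξ, π F η⟫_ℂ = F (omegaA ξ η)) :
    ∀ F G : StrongDual ℂ (StrongDual ℂ A),
      ∃ C : StrongDual ℂ (StrongDual ℂ A),
        π C = (π F).comp (π G) ∧
        ∀ ξ η : H, C (omegaA ξ η) = ⟪ξ, π F (π G η)⟫_ℂ :=
  pi_image_closed_under_composition_general A H ρu omegaA homega π hπ
end
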